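/- arXiv:0903.5084 — 2 statements merged into one kernel-verified Lean document; each statement's English description precedes it below -/
import Mathlib

section
/- Let N ≥ 0 be an integer, b_0 > 0 a real number, and k_1, …, k_N > 0 real numbers. Suppose F : [0,∞) → (0,∞) satisfies: F(0) = 1; log F is convex on [0,∞); and F(k+1) = b_0 · (∏_{i=1}^N (k + k_i)) · F(k) for all k ≥ 0. Then F(k) = b_0^k · ∏_{i=1}^N Γ(k + k_i)/Γ(k_i) for all k ≥ 0, where Γ is the real Gamma function. -/
/-!
Both `log F` and `log` of the Gamma product are convex solutions of
`f (x + 1) = f x + c x` with `c x = log (b₀ * ∏ i, (x + κ i))`: the latter by `Γ (x + 1) = x Γ x`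
and the log-convexity of `Γ`. Their difference `h` is therefore `1`-periodic. Convexity traps the
increment of a solution over `[n + 1, n + 1 + x]` between `x c n` and `x c (n + 1)`, hence
`|h x - h 0| ≤ x (c (n + 1) - c n)`, which tends to `0` because `c` grows only logarithmically.
-/

open Finset Filter Set Real
open scoped Topology

theorem ConvexOn.finset_sum {𝕜 E β ι : Type*} [Semiring 𝕜] [PartialOrder 𝕜]
    [AddCommMonoid E] [AddCommMonoid β] [PartialOrder β] [IsOrderedAddMonoid β] [SMul 𝕜 E]
    [Module 𝕜 β] {s : Set E} (t : Finset ι) {f : ι → E → β} (hs : Convex 𝕜 s)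
    (h : ∀ i ∈ t, ConvexOn 𝕜 s (f i)) : ConvexOn 𝕜 s fun x => ∑ i ∈ t, f i x := by
  classical
  induction t using Finset.induction with
  | empty => simpa using convexOn_const (0 : β) hs
  | insert j t hj ih =>
    simp only [sum_insert hj]
    exact (h j (mem_insert_self j t)).add (ih fun i hi => h i (mem_insert_of_mem hi))

section DifferenceEquation

variable {f g c : ℝ → ℝ}

lemma eq_add_natCast_of_add_one_eq (hf : ∀ x, 0 ≤ x → f (x + 1) = f x) {x : ℝ} (hx : 0 ≤ x) :
    ∀ n : ℕ, f (x + n) = f x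
  | 0 => by simp
  | n + 1 => by
    rw [Nat.cast_succ, ← add_assoc, hf _ (by positivity), eq_add_natCast_of_add_one_eq hf hx n]

lemma ConvexOn.mul_le_sub_le_mul_of_add_one_eq (hfc : ConvexOn ℝ (Ici 0) f)
    (hf : ∀ y, 0 ≤ y → f (y + 1) = f y + c y) {a x : ℝ} (ha : 0 ≤ a) (hx₀ : 0 < x)
    (hx₁ : x < 1) :
    x * c a ≤ f (a + 1 + x) - f (a + 1) ∧ f (a + 1 + x) - f (a + 1) ≤ x * c (a + 1) := by
  have hlow := hfc.slope_mono_adjacent (x := a) (y := a + 1) (z := a + 1 + x) (mem_Ici.2 ha)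
    (mem_Ici.2 (by positivity)) (by linarith) (by linarith)
  have hup := hfc.secant_mono_aux2 (x := a + 1) (y := a + 1 + x) (z := a + 1 + 1)
    (mem_Ici.2 (by positivity)) (mem_Ici.2 (by positivity)) (by linarith) (by linarith)
  rw [hf a ha, show a + 1 - a = 1 by ring, show a + 1 + x - (a + 1) = x by ring,
    le_div_iff₀ hx₀, add_sub_cancel_left, div_one] at hlow
  rw [hf (a + 1) (by positivity), show a + 1 + 1 - (a + 1) = 1 by ring,
    show a + 1 + x - (a + 1) = x by ring, div_le_iff₀ hx₀, add_sub_cancel_left, div_one] at hup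
  constructor <;> linarith [hf a ha]

theorem ConvexOn.eqOn_of_add_one_eq (hfc : ConvexOn ℝ (Ici 0) f) (hgc : ConvexOn ℝ (Ici 0) g)
    (hf : ∀ x, 0 ≤ x → f (x + 1) = f x + c x) (hg : ∀ x, 0 ≤ x → g (x + 1) = g x + c x)
    (hc : Tendsto (fun n : ℕ => c (n + 1) - c n) atTop (𝓝 0)) (h₀ : f 0 = g 0) :
    EqOn f g (Ici 0) := by
  have hper : ∀ x, 0 ≤ x → (f - g) (x + 1) = (f - g) x := fun x hx => by
    simp only [Pi.sub_apply, hf x hx, hg x hx]; ring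
  have hfrac : ∀ x, 0 < x → x < 1 → f x = g x := by
    intro x hx₀ hx₁
    have hbound : ∀ n : ℕ, |(f - g) x| ≤ x * (c (n + 1) - c n) := fun n => by
      have hshift := eq_add_natCast_of_add_one_eq hper hx₀.le (n + 1)
      have hone := eq_add_natCast_of_add_one_eq hper le_rfl (n + 1)
      obtain ⟨hf₁, hf₂⟩ := hfc.mul_le_sub_le_mul_of_add_one_eq hf n.cast_nonneg hx₀ hx₁
      obtain ⟨hg₁, hg₂⟩ := hgc.mul_le_sub_le_mul_of_add_one_eq hg n.cast_nonneg hx₀ hx₁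
      simp only [Pi.sub_apply, Nat.cast_succ, zero_add, h₀, sub_self] at hshift hone ⊢
      rw [add_comm x] at hshift
      rw [abs_le]
      constructor <;> linarith
    have := ge_of_tendsto' (by simpa using hc.const_mul x) hbound
    simpa [sub_eq_zero] using this
  intro x (hx : 0 ≤ x)
  have hy₀ : 0 ≤ x - ⌊x⌋₊ := by linarith [Nat.floor_le hx]
  have hy : f (x - ⌊x⌋₊) = g (x - ⌊x⌋₊) := by
    rcases hy₀.eq_or_lt with h | h
    · rwa [← h]
    · exact hfrac _ h (by linarith [Nat.lt_floor_add_one x])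
  have := eq_add_natCast_of_add_one_eq hper hy₀ ⌊x⌋₊
  rwa [sub_add_cancel, Pi.sub_apply, Pi.sub_apply, hy, sub_self, sub_eq_zero] at this

end DifferenceEquation

theorem eqOn_of_convexOn_log_of_add_one_eq_mul {F G a : ℝ → ℝ} (hF : ∀ x, 0 ≤ x → 0 < F x)
    (hG : ∀ x, 0 ≤ x → 0 < G x) (hFc : ConvexOn ℝ (Ici 0) fun x => log (F x))
    (hGc : ConvexOn ℝ (Ici 0) fun x => log (G x)) (hFa : ∀ x, 0 ≤ x → F (x + 1) = a x * F x)
    (hGa : ∀ x, 0 ≤ x → G (x + 1) = a x * G x)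
    (ha : Tendsto (fun n : ℕ => log (a (n + 1)) - log (a n)) atTop (𝓝 0)) (h₀ : F 0 = G 0) :
    EqOn F G (Ici 0) := by
  have hlog {H : ℝ → ℝ} (hH : ∀ x, 0 ≤ x → 0 < H x) (hHa : ∀ x, 0 ≤ x → H (x + 1) = a x * H x)
      (x : ℝ) (hx : 0 ≤ x) : log (H (x + 1)) = log (H x) + log (a x) := by
    have hax : a x ≠ 0 := by
      rintro hax
      have := hH (x + 1) (by positivity)
      rw [hHa x hx, hax, zero_mul] at this
      exact this.false
    rw [hHa x hx, log_mul hax (hH x hx).ne', add_comm]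
  intro x hx
  refine log_injOn_pos (hF x hx) (hG x hx) ?_
  exact hFc.eqOn_of_add_one_eq hGc (hlog hF hFa) (hlog hG hGa) ha (by rw [h₀]) hx

section GammaProduct

variable {ι : Type*} [Fintype ι] {b₀ : ℝ} {κ : ι → ℝ}

variable (b₀ κ) in
noncomputable def gammaProduct (k : ℝ) : ℝ := b₀ ^ k * ∏ i, Gamma (k + κ i) / Gamma (κ i)

lemma gammaProduct_zero (hκ : ∀ i, 0 < κ i) : gammaProduct b₀ κ 0 = 1 := by
  simp [gammaProduct, fun i => (Gamma_pos_of_pos (hκ i)).ne']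

lemma gammaProduct_pos (hb₀ : 0 < b₀) (hκ : ∀ i, 0 < κ i) {k : ℝ} (hk : 0 ≤ k) :
    0 < gammaProduct b₀ κ k :=
  mul_pos (rpow_pos_of_pos hb₀ k) <| prod_pos fun i _ =>
    div_pos (Gamma_pos_of_pos (by linarith [hκ i])) (Gamma_pos_of_pos (hκ i))

lemma gammaProduct_add_one (hb₀ : b₀ ≠ 0) (hκ : ∀ i, 0 < κ i) {k : ℝ} (hk : 0 ≤ k) :
    gammaProduct b₀ κ (k + 1) = b₀ * (∏ i, (k + κ i)) * gammaProduct b₀ κ k := by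
  have hΓ : ∀ i, Gamma (k + 1 + κ i) = (k + κ i) * Gamma (k + κ i) := fun i => by
    rw [add_right_comm, Gamma_add_one (by linarith [hκ i])]
  simp only [gammaProduct, rpow_add_one hb₀, hΓ, mul_div_assoc, prod_mul_distrib]
  ring

lemma log_gammaProduct (hb₀ : 0 < b₀) (hκ : ∀ i, 0 < κ i) {k : ℝ} (hk : 0 ≤ k) :
    log (gammaProduct b₀ κ k) =
      k * log b₀ + ∑ i, (log (Gamma (k + κ i)) - log (Gamma (κ i))) := by
  have hΓ : ∀ i, Gamma (k + κ i) / Gamma (κ i) ≠ 0 := fun i =>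
    (div_pos (Gamma_pos_of_pos (by linarith [hκ i])) (Gamma_pos_of_pos (hκ i))).ne'
  rw [gammaProduct, log_mul (rpow_pos_of_pos hb₀ k).ne' (prod_ne_zero_iff.2 fun i _ => hΓ i),
    log_rpow hb₀, log_prod fun i _ => hΓ i]
  congr 1
  refine sum_congr rfl fun i _ => log_div ?_ ?_
  · exact (Gamma_pos_of_pos (by linarith [hκ i])).ne'
  · exact (Gamma_pos_of_pos (hκ i)).ne'

lemma convexOn_log_gammaProduct (hb₀ : 0 < b₀) (hκ : ∀ i, 0 < κ i) :
    ConvexOn ℝ (Ici 0) fun k => log (gammaProduct b₀ κ k) := by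
  have hshift : ∀ i, ConvexOn ℝ (Ici 0) fun k => log (Gamma (k + κ i)) - log (Gamma (κ i)) :=
    fun i => by
      have := (convexOn_log_Gamma.translate_left (κ i)).subset
        (fun k (hk : 0 ≤ k) => show 0 < κ i + k by linarith [hκ i]) (convex_Ici 0)
      exact (this.add_const (-log (Gamma (κ i)))).congr fun k _ => by simp [sub_eq_add_neg]
  refine (((LinearMap.mulRight ℝ (log b₀)).convexOn (convex_Ici 0)).add
    (ConvexOn.finset_sum univ (convex_Ici 0) fun i _ => hshift i)).congr fun k hk => ?_
  simp [log_gammaProduct hb₀ hκ hk]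

lemma tendsto_log_mul_prod_add_one_sub_log (hb₀ : b₀ ≠ 0) (κ : ι → ℝ) :
    Tendsto (fun x : ℝ => log (b₀ * ∏ i, (x + 1 + κ i)) - log (b₀ * ∏ i, (x + κ i)))
      atTop (𝓝 0) := by
  have hsum : Tendsto (fun x => ∑ i, (log (x + κ i + 1) - log (x + κ i))) atTop (𝓝 0) := by
    simpa using tendsto_finsetSum univ fun i _ =>
      (tendsto_log_comp_add_sub_log 1).comp (tendsto_atTop_add_const_right _ (κ i) tendsto_id)
  refine hsum.congr' ?_
  filter_upwards [eventually_all.2 fun i => eventually_gt_atTop (-κ i)] with x hx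
  have hpos : ∀ i, 0 < x + κ i := fun i => by linarith [hx i]
  have hpos' : ∀ i, 0 < x + 1 + κ i := fun i => by linarith [hx i]
  rw [log_mul hb₀ (prod_ne_zero_iff.2 fun i _ => (hpos' i).ne'),
    log_mul hb₀ (prod_ne_zero_iff.2 fun i _ => (hpos i).ne'),
    log_prod fun i _ => (hpos' i).ne', log_prod fun i _ => (hpos i).ne', sum_sub_distrib]
  simp only [add_right_comm x 1]
  ring

end GammaProduct

/-- **A Bohr–Mollerup-type uniqueness principle.** If `F : [0,∞) → (0,∞)`
satisfies `F(0) = 1`, `log F` is convex on `[0,∞)`, and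
`F(k+1) = b₀ ∏_i (k + k_i) F(k)` with `b₀ > 0` and all `k_i > 0`, then
`F(k) = b₀^k ∏_i Γ(k + k_i)/Γ(k_i)`. -/
theorem gamma_product_uniqueness
    (N : ℕ) (b₀ : ℝ) (hb₀ : 0 < b₀)
    (κ : Fin N → ℝ) (hκ : ∀ i, 0 < κ i)
    (F : ℝ → ℝ)
    (hFpos : ∀ k : ℝ, 0 ≤ k → 0 < F k)
    (hF0 : F 0 = 1)
    (hconv : ConvexOn ℝ (Set.Ici (0 : ℝ)) (fun k => Real.log (F k)))
    (hrec : ∀ k : ℝ, 0 ≤ k → F (k + 1) = b₀ * (∏ i, (k + κ i)) * F k) :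
    ∀ k : ℝ, 0 ≤ k →
      F k = b₀ ^ k * ∏ i, Real.Gamma (k + κ i) / Real.Gamma (κ i) := fun _ hk =>
  eqOn_of_convexOn_log_of_add_one_eq_mul (a := fun k => b₀ * ∏ i, (k + κ i)) hFpos
    (fun _ hx => gammaProduct_pos hb₀ hκ hx) hconv (convexOn_log_gammaProduct hb₀ hκ) hrec
    (fun _ hx => gammaProduct_add_one hb₀.ne' hκ hx)
    ((tendsto_log_mul_prod_add_one_sub_log hb₀.ne' κ).comp tendsto_natCast_atTop_atTop)
    (by rw [hF0, gammaProduct_zero hκ]) hk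
end

section
/- As k → +∞ along the reals, log F(k)/(k·log k) tends to |S|; that is, the leading term of the asymptotics of log F(k) is |S|·k·log k. -/
open MeasureTheory Finset
open scoped RealInnerProductSpace

noncomputable section

/-- `V = ℝ^r` as a Euclidean space. -/
abbrev EucV (r : ℕ) := EuclideanSpace ℝ (Fin r)

/-- An orthogonal reflection: an orthogonal transformation fixing a hyperplane
pointwise and acting as `-1` on its orthogonal complement; equivalently, it is
given by the standard reflection formula for some root `a` with `(a,a) = 2`. -/
def IsReflection {r : ℕ} (w : EucV r ≃ₗᵢ[ℝ] EucV r) : Prop :=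
  ∃ a : EucV r, ⟪a, a⟫ = 2 ∧ ∀ v : EucV r, w v = v - ⟪a, v⟫ • a

/-- The discriminant polynomial `Δ(x) = ∏_{s ∈ S} (α_s, x)`. -/
def MMdelta {r : ℕ} (S : Finset (EucV r ≃ₗᵢ[ℝ] EucV r))
    (α : (EucV r ≃ₗᵢ[ℝ] EucV r) → EucV r) (x : EucV r) : ℝ :=
  ∏ s ∈ S, ⟪α s, x⟫

/-- The Macdonald–Mehta integral `F(k) = (2π)^{-r/2} ∫ e^{-(x,x)/2} |Δ(x)|^{2k} dx`
for real `k`. -/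
def MMF (r : ℕ) (S : Finset (EucV r ≃ₗᵢ[ℝ] EucV r))
    (α : (EucV r ≃ₗᵢ[ℝ] EucV r) → EucV r) (k : ℝ) : ℝ :=
  (2 * Real.pi) ^ (-(r : ℝ) / 2) *
    ∫ x : EucV r, Real.exp (-⟪x, x⟫ / 2) * |MMdelta S α x| ^ (2 * k)

/-- The submodule of `W`-invariant homogeneous polynomials of degree `n` on `ℝ^r`. -/
def invHomog (r : ℕ) (W : Subgroup (EucV r ≃ₗᵢ[ℝ] EucV r)) (n : ℕ) :
    Submodule ℝ (MvPolynomial (Fin r) ℝ) where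
  carrier := {p | p.IsHomogeneous n ∧ ∀ w ∈ W, ∀ x : EucV r,
    MvPolynomial.eval (fun i => (w x) i) p = MvPolynomial.eval (fun i => x i) p}
  add_mem' := by
    intro p q hp hq
    exact ⟨hp.1.add hq.1, fun w hw x => by simp [hp.2 w hw x, hq.2 w hw x]⟩
  zero_mem' := ⟨MvPolynomial.isHomogeneous_zero _ _ _, by simp⟩
  smul_mem' := by
    intro c p hp
    refine ⟨?_, fun w hw x => by simp [hp.2 w hw x]⟩
    rw [MvPolynomial.smul_eq_C_mul]
    simpa using (MvPolynomial.isHomogeneous_C _ c).mul hp.1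

/-- `d : Fin r → ℕ` is a sequence of degrees for the reflection group `W`:
each `d i` is positive and for every `n` the dimension of the space of
`W`-invariant homogeneous polynomials of degree `n` equals the coefficient of
`q^n` in `∏_i (1 - q^{d_i})⁻¹`, i.e. the number of `r`-tuples `(m_1,…,m_r)` of
nonnegative integers with `∑ d_i m_i = n`. -/
def HasDegrees (r : ℕ) (W : Subgroup (EucV r ≃ₗᵢ[ℝ] EucV r)) (d : Fin r → ℕ) : Prop :=
  (∀ i, 0 < d i) ∧
    ∀ n : ℕ, Module.finrank ℝ (invHomog r W n) =
      Nat.card {f : Fin r → ℕ // ∑ i, d i * f i = n}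

/-!
`Δ` is a product of `N = |S|` nonzero linear forms: it is homogeneous of degree `N`, bounded by
`C ‖x‖ ^ N`, and bounded below by some `c > 0` on a small ball `B(x₀, δ)`. On the ball
`√k • B(x₀, δ)` the integrand is at least `(b k ^ N) ^ k`, so `F k ≥ a (b k ^ N) ^ k`. Conversely
`‖x‖ ^ (2N) ≤ N! (4k) ^ N exp (‖x‖² / 4k)` bounds the integrand by `(B k ^ N) ^ k exp (-‖x‖² / 4)`,
so `F k ≤ A (B k ^ N) ^ k`. Hence `log F k = N k log k + O(k)`.
-/

open Real Filter Asymptotics Topology Metric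
open scoped Nat Pointwise

theorem tendsto_div_mul_log_of_sub_isBigO {g : ℝ → ℝ} {N : ℝ}
    (h : (fun k => g k - N * (k * log k)) =O[atTop] id) :
    Tendsto (fun k => g k / (k * log k)) atTop (𝓝 N) := by
  have hid : (fun k : ℝ => k) =o[atTop] fun k => k * log k :=
    ((isBigO_refl (fun k : ℝ => k) atTop).mul_isLittleO ((isLittleO_one_left_iff ℝ).2
      (tendsto_norm_atTop_atTop.comp tendsto_log_atTop))).congr_left fun k => mul_one k
  have h0 := (h.trans_isLittleO hid).tendsto_div_nhds_zero.add_const N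
  rw [zero_add] at h0
  refine h0.congr' ?_
  filter_upwards [eventually_gt_atTop 1] with k hk
  have : k * log k ≠ 0 := (mul_pos (by linarith) (log_pos hk)).ne'
  rw [sub_div, mul_div_cancel_right₀ _ this, sub_add_cancel]

theorem log_mul_mul_rpow_rpow {a b k : ℝ} (N : ℝ) (ha : 0 < a) (hb : 0 < b) (hk : 0 < k) :
    log (a * (b * k ^ N) ^ k) = N * (k * log k) + (log a + log b * k) := by
  rw [log_mul ha.ne' (by positivity), log_rpow (by positivity), log_mul hb.ne' (by positivity),
    log_rpow hk]
  ring

theorem tendsto_log_div_mul_log_of_le_of_le {F : ℝ → ℝ} {N a b A B : ℝ}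
    (ha : 0 < a) (hb : 0 < b) (hA : 0 < A) (hB : 0 < B)
    (hlo : ∀ᶠ k in atTop, a * (b * k ^ N) ^ k ≤ F k)
    (hhi : ∀ᶠ k in atTop, F k ≤ A * (B * k ^ N) ^ k) :
    Tendsto (fun k => log (F k) / (k * log k)) atTop (𝓝 N) := by
  have affine_isBigO (c d : ℝ) : (fun k : ℝ => c + d * k) =O[atTop] id :=
    (isLittleO_const_id_atTop c).isBigO.add ((isBigO_refl id atTop).const_mul_left d)
  refine tendsto_div_mul_log_of_sub_isBigO <| IsBigO.trans (g := fun k =>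
      ‖log a + log b * k‖ + ‖log A + log B * k‖) (IsBigO.of_norm_eventuallyLE ?_)
    ((affine_isBigO _ _).norm_left.add (affine_isBigO _ _).norm_left)
  filter_upwards [hlo, hhi, eventually_gt_atTop 0] with k hlo hhi hk
  have hpos : 0 < a * (b * k ^ N) ^ k := by positivity
  have hlog_lo := log_le_log hpos hlo
  have hlog_hi := log_le_log (hpos.trans_le hlo) hhi
  rw [log_mul_mul_rpow_rpow N ha hb hk] at hlog_lo
  rw [log_mul_mul_rpow_rpow N hA hB hk] at hlog_hi
  rw [Real.norm_eq_abs, Real.norm_eq_abs, Real.norm_eq_abs, abs_le]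
  constructor <;> linarith [neg_abs_le (log a + log b * k), le_abs_self (log A + log B * k),
    abs_nonneg (log a + log b * k), abs_nonneg (log A + log B * k)]

theorem pow_le_factorial_mul_pow_mul_exp {t s : ℝ} (ht : 0 ≤ t) (hs : 0 < s) (n : ℕ) :
    t ^ n ≤ n ! * s ^ n * exp (t / s) := by
  have := pow_div_factorial_le_exp _ (div_nonneg ht hs.le) n
  rw [div_pow, div_div, div_le_iff₀ (by positivity)] at this
  linarith

section GaussianMoment

variable {V : Type*} [NormedAddCommGroup V] [InnerProductSpace ℝ V] {f : V → ℝ} {C : ℝ} {N : ℕ}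
  {k : ℝ}

theorem exp_mul_abs_rpow_eq (f : V → ℝ) (hk : k ≠ 0) (x : V) :
    exp (-⟪x, x⟫ / 2) * |f x| ^ (2 * k) = (exp (-‖x‖ ^ 2 / (2 * k)) * f x ^ 2) ^ k := by
  rw [mul_rpow (exp_pos _).le (sq_nonneg _), ← exp_mul, rpow_mul (abs_nonneg _), rpow_two,
    sq_abs, real_inner_self_eq_norm_sq]
  congr 2
  field_simp

theorem exp_mul_abs_rpow_le (hf : ∀ x, |f x| ≤ C * ‖x‖ ^ N) (hk : 0 < k) (x : V) :
    exp (-⟪x, x⟫ / 2) * |f x| ^ (2 * k) ≤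
      (4 ^ N * N ! * C ^ 2 * k ^ N) ^ k * exp (-(1 / 4) * ‖x‖ ^ 2) := by
  have hsq : f x ^ 2 ≤ 4 ^ N * N ! * C ^ 2 * k ^ N * exp (‖x‖ ^ 2 / (4 * k)) := calc
    f x ^ 2 ≤ C ^ 2 * (‖x‖ ^ 2) ^ N := by
      rw [← sq_abs, ← pow_mul, mul_comm 2 N, pow_mul, ← mul_pow]
      exact pow_le_pow_left₀ (abs_nonneg _) (hf x) 2
    _ ≤ C ^ 2 * (N ! * (4 * k) ^ N * exp (‖x‖ ^ 2 / (4 * k))) := by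
      gcongr; exact pow_le_factorial_mul_pow_mul_exp (by positivity) (by positivity) N
    _ = _ := by ring
  have hexp : exp (-‖x‖ ^ 2 / 2) * exp (‖x‖ ^ 2 / (4 * k) * k) = exp (-(1 / 4) * ‖x‖ ^ 2) := by
    rw [← exp_add]; congr 1; field_simp; ring
  calc exp (-⟪x, x⟫ / 2) * |f x| ^ (2 * k) = exp (-‖x‖ ^ 2 / 2) * (f x ^ 2) ^ k := by
        rw [real_inner_self_eq_norm_sq, rpow_mul (abs_nonneg _), rpow_two, sq_abs]
    _ ≤ exp (-‖x‖ ^ 2 / 2) * (4 ^ N * N ! * C ^ 2 * k ^ N * exp (‖x‖ ^ 2 / (4 * k))) ^ k := by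
        gcongr
    _ = _ := by
        rw [mul_rpow (by positivity) (exp_pos _).le, ← exp_mul, mul_left_comm, hexp]

theorem le_exp_mul_abs_rpow_sqrt_smul (hhom : ∀ t : ℝ, 0 < t → ∀ x, f (t • x) = t ^ N * f x)
    {y : V} {M c : ℝ} (hc : 0 ≤ c) (hy : ‖y‖ ≤ M) (hfy : c ≤ |f y|) (hk : 0 < k) :
    (exp (-M ^ 2 / 2) * c ^ 2 * k ^ N) ^ k ≤
      exp (-⟪√k • y, √k • y⟫ / 2) * |f (√k • y)| ^ (2 * k) := by
  have hsqrt : √k ^ 2 = k := sq_sqrt hk.le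
  have hf_ty : f (√k • y) ^ 2 = k ^ N * f y ^ 2 := by
    rw [hhom √k (sqrt_pos.2 hk) y, mul_pow, ← pow_mul, mul_comm N, pow_mul, hsqrt]
  have hnorm_ty : -‖√k • y‖ ^ 2 / (2 * k) = -‖y‖ ^ 2 / 2 := by
    rw [norm_smul, norm_of_nonneg (sqrt_nonneg k), mul_pow, hsqrt]
    field_simp
  rw [exp_mul_abs_rpow_eq f hk.ne', hf_ty, hnorm_ty]
  have : c ^ 2 ≤ f y ^ 2 := by
    rw [← sq_abs (f y)]; exact pow_le_pow_left₀ hc hfy 2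
  have : ‖y‖ ^ 2 ≤ M ^ 2 := pow_le_pow_left₀ (norm_nonneg y) hy 2
  gcongr ?_ ^ k
  calc exp (-M ^ 2 / 2) * c ^ 2 * k ^ N ≤ exp (-‖y‖ ^ 2 / 2) * f y ^ 2 * k ^ N := by gcongr
    _ = _ := by ring

variable [FiniteDimensional ℝ V] [MeasurableSpace V] [BorelSpace V]

def gaussianMoment (f : V → ℝ) (k : ℝ) : ℝ :=
  ∫ x, exp (-⟪x, x⟫ / 2) * |f x| ^ (2 * k)

theorem integrable_exp_neg_mul_sq_norm {b : ℝ} (hb : 0 < b) :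
    Integrable fun x : V => exp (-b * ‖x‖ ^ 2) :=
  Integrable.of_integral_ne_zero <| by
    rw [GaussianFourier.integral_rexp_neg_mul_sq_norm hb]; positivity

theorem integrable_exp_mul_abs_rpow (hf_meas : Measurable f) (hf : ∀ x, |f x| ≤ C * ‖x‖ ^ N)
    (hk : 0 < k) : Integrable fun x : V => exp (-⟪x, x⟫ / 2) * |f x| ^ (2 * k) := by
  refine ((integrable_exp_neg_mul_sq_norm (by norm_num : (0 : ℝ) < 1 / 4)).const_mul
    ((4 ^ N * N ! * C ^ 2 * k ^ N) ^ k)).mono'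
    (by fun_prop : Measurable _).aestronglyMeasurable (.of_forall fun x => ?_)
  rw [Real.norm_of_nonneg (by positivity)]
  exact exp_mul_abs_rpow_le hf hk x

theorem gaussianMoment_le (hf_meas : Measurable f) (hf : ∀ x, |f x| ≤ C * ‖x‖ ^ N) (hk : 0 < k) :
    gaussianMoment f k ≤
      (4 * π) ^ (Module.finrank ℝ V / 2 : ℝ) * (4 ^ N * N ! * C ^ 2 * k ^ N) ^ k := by
  calc gaussianMoment f k ≤ ∫ x : V, (4 ^ N * N ! * C ^ 2 * k ^ N) ^ k * exp (-(1 / 4) * ‖x‖ ^ 2) :=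
        integral_mono (integrable_exp_mul_abs_rpow hf_meas hf hk)
          ((integrable_exp_neg_mul_sq_norm (by norm_num)).const_mul _) (exp_mul_abs_rpow_le hf hk)
    _ = _ := by
        rw [integral_const_mul, GaussianFourier.integral_rexp_neg_mul_sq_norm (by norm_num),
          mul_comm]
        norm_num [div_div_eq_mul_div, mul_comm]

theorem le_gaussianMoment (hf_meas : Measurable f) (hf : ∀ x, |f x| ≤ C * ‖x‖ ^ N)
    (hhom : ∀ t : ℝ, 0 < t → ∀ x, f (t • x) = t ^ N * f x) {x₀ : V} {δ c : ℝ} (hc : 0 ≤ c)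
    (hlow : ∀ y ∈ closedBall x₀ δ, c ≤ |f y|) (hk : 1 ≤ k) :
    (exp (-(‖x₀‖ + δ) ^ 2 / 2) * c ^ 2 * k ^ N) ^ k * volume.real (closedBall x₀ δ) ≤
      gaussianMoment f k := by
  have hint := integrable_exp_mul_abs_rpow hf_meas hf (by linarith : 0 < k)
  have hball : IsCompact (√k • closedBall x₀ δ) := (isCompact_closedBall x₀ δ).smul √k
  have hpt : ∀ x ∈ √k • closedBall x₀ δ,
      (exp (-(‖x₀‖ + δ) ^ 2 / 2) * c ^ 2 * k ^ N) ^ k ≤ exp (-⟪x, x⟫ / 2) * |f x| ^ (2 * k) := by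
    rintro _ ⟨y, hy, rfl⟩
    exact le_exp_mul_abs_rpow_sqrt_smul hhom hc (norm_le_of_mem_closedBall hy) (hlow y hy)
      (by linarith)
  have hvol : volume.real (closedBall x₀ δ) ≤ volume.real (√k • closedBall x₀ δ) := by
    rw [measureReal_def, measureReal_def, Measure.addHaar_smul, ENNReal.toReal_mul,
      ENNReal.toReal_ofReal (by positivity)]
    exact le_mul_of_one_le_left ENNReal.toReal_nonneg
      (by rw [abs_of_nonneg (by positivity)]; exact one_le_pow₀ (one_le_sqrt.2 hk))
  calc (exp (-(‖x₀‖ + δ) ^ 2 / 2) * c ^ 2 * k ^ N) ^ k * volume.real (closedBall x₀ δ)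
      ≤ (exp (-(‖x₀‖ + δ) ^ 2 / 2) * c ^ 2 * k ^ N) ^ k * volume.real (√k • closedBall x₀ δ) := by
        gcongr
    _ ≤ ∫ x in √k • closedBall x₀ δ, exp (-⟪x, x⟫ / 2) * |f x| ^ (2 * k) :=
        setIntegral_ge_of_const_le_real hball.measurableSet hball.measure_lt_top.ne hpt
          hint.integrableOn
    _ ≤ gaussianMoment f k :=
        setIntegral_le_integral hint (.of_forall fun x => by positivity)

theorem tendsto_log_const_mul_gaussianMoment_div {c₀ : ℝ} (hc₀ : 0 < c₀) (hf_meas : Measurable f)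
    (hf : ∀ x, |f x| ≤ C * ‖x‖ ^ N) (hhom : ∀ t : ℝ, 0 < t → ∀ x, f (t • x) = t ^ N * f x)
    {x₀ : V} (hx₀ : ContinuousAt f x₀) (hfx₀ : f x₀ ≠ 0) :
    Tendsto (fun k => log (c₀ * gaussianMoment f k) / (k * log k)) atTop (𝓝 N) := by
  have hfx₀_pos : 0 < |f x₀| := abs_pos.2 hfx₀
  have hC : 0 < C := pos_of_mul_pos_left (hfx₀_pos.trans_le (hf x₀)) (by positivity)
  obtain ⟨δ, hδ, hlow⟩ := nhds_basis_closedBall.eventually_iff.1 <|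
    hx₀.abs.eventually (lt_mem_nhds (half_lt_self hfx₀_pos))
  have hvol : 0 < volume.real (closedBall x₀ δ) :=
    ENNReal.toReal_pos (measure_closedBall_pos _ _ hδ).ne' measure_closedBall_lt_top.ne
  refine tendsto_log_div_mul_log_of_le_of_le
    (a := c₀ * volume.real (closedBall x₀ δ)) (b := exp (-(‖x₀‖ + δ) ^ 2 / 2) * (|f x₀| / 2) ^ 2)
    (A := c₀ * (4 * π) ^ (Module.finrank ℝ V / 2 : ℝ)) (B := 4 ^ N * N ! * C ^ 2)
    (by positivity) (by positivity) (by positivity) (by positivity) ?_ ?_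
  · filter_upwards [eventually_ge_atTop 1] with k hk
    have := le_gaussianMoment hf_meas hf hhom (by positivity) (fun y hy => (hlow hy).le) hk
    rw [rpow_natCast, mul_assoc, mul_comm (volume.real _)]
    exact mul_le_mul_of_nonneg_left this hc₀.le
  · filter_upwards [eventually_gt_atTop 0] with k hk
    rw [rpow_natCast, mul_assoc]
    exact mul_le_mul_of_nonneg_left (gaussianMoment_le hf_meas hf hk) hc₀.le

end GaussianMoment

section Discriminant

variable {r : ℕ} (S : Finset (EucV r ≃ₗᵢ[ℝ] EucV r)) (α : (EucV r ≃ₗᵢ[ℝ] EucV r) → EucV r)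

theorem continuous_MMdelta : Continuous (MMdelta S α) := by
  unfold MMdelta; fun_prop

theorem MMdelta_smul (t : ℝ) (x : EucV r) : MMdelta S α (t • x) = t ^ S.card * MMdelta S α x := by
  simp only [MMdelta, real_inner_smul_right, prod_mul_distrib, prod_const]

theorem abs_MMdelta_le (x : EucV r) : |MMdelta S α x| ≤ (∏ s ∈ S, ‖α s‖) * ‖x‖ ^ S.card := by
  rw [MMdelta, abs_prod, ← prod_const, ← prod_mul_distrib]
  exact prod_le_prod (fun s _ => abs_nonneg _) fun s _ => abs_real_inner_le_norm _ _

theorem exists_MMdelta_ne_zero (hα : ∀ s ∈ S, α s ≠ 0) : ∃ x, MMdelta S α x ≠ 0 := by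
  obtain ⟨x, hx⟩ := Module.Dual.exists_forall_ne_zero_of_forall_exists
    (fun s : S => (innerSL ℝ (α s) : EucV r →ₗ[ℝ] ℝ)) fun s =>
      ⟨α s, by simpa using hα s s.2⟩
  exact ⟨x, prod_ne_zero_iff.2 fun s hs => hx ⟨s, hs⟩⟩

end Discriminant

theorem macdonald_mehta_asymptotics_general
    (r : ℕ)
    (S : Finset (EucV r ≃ₗᵢ[ℝ] EucV r))
    (α : (EucV r ≃ₗᵢ[ℝ] EucV r) → EucV r)
    (hα : ∀ s ∈ S, ⟪α s, α s⟫ = 2 ∧ ∀ v : EucV r, s v = v - ⟪α s, v⟫ • α s) :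
    Filter.Tendsto (fun k : ℝ => Real.log (MMF r S α k) / (k * Real.log k))
      Filter.atTop (nhds (S.card : ℝ)) := by
  have hα₀ : ∀ s ∈ S, α s ≠ 0 := fun s hs h => by simpa [h] using (hα s hs).1
  obtain ⟨x₀, hx₀⟩ := exists_MMdelta_ne_zero S α hα₀
  -- `MMF r S α` unfolds to `(2 * π) ^ (-r / 2) * gaussianMoment (MMdelta S α)`.
  exact tendsto_log_const_mul_gaussianMoment_div (by positivity)
    (continuous_MMdelta S α).measurable (abs_MMdelta_le S α)
    (fun t _ x => MMdelta_smul S α t x) (continuous_MMdelta S α).continuousAt hx₀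

/-- As `k → +∞`, `log F(k) / (k log k) → |S|`. -/
theorem macdonald_mehta_asymptotics
    (r : ℕ) (hr : 1 ≤ r)
    (W : Subgroup (EucV r ≃ₗᵢ[ℝ] EucV r)) (hWfin : Finite W)
    (S : Finset (EucV r ≃ₗᵢ[ℝ] EucV r))
    (hS : ∀ w, w ∈ S ↔ w ∈ W ∧ IsReflection w)
    (hgen : Subgroup.closure (S : Set (EucV r ≃ₗᵢ[ℝ] EucV r)) = W)
    (α : (EucV r ≃ₗᵢ[ℝ] EucV r) → EucV r)
    (hα : ∀ s ∈ S, ⟪α s, α s⟫ = 2 ∧ ∀ v : EucV r, s v = v - ⟪α s, v⟫ • α s) :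
    Filter.Tendsto (fun k : ℝ => Real.log (MMF r S α k) / (k * Real.log k))
      Filter.atTop (nhds (S.card : ℝ)) :=
  macdonald_mehta_asymptotics_general r S α hα
end
end
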